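/- arXiv:1410.4363 — 2 statements merged into one kernel-verified Lean document; each statement's English description precedes it below -/
import Mathlib

section
/- Every infinite virtually cyclic subgroup Q of Houghton's group H_n is finite-by-ℤ: there exists a finite normal subgroup F ⊴ Q such that the quotient Q/F is infinite cyclic. In particular, no infinite virtually cyclic subgroup of H_n is finite-by-(infinite dihedral). -/
/-!
The translation vectors give a homomorphism `ψ : H_n → ℤⁿ` whose kernel consists of finitary
permutations, hence of elements of finite order. In a virtually cyclic group a subgroup of
elements of finite order is finite, so `ker ψ ∩ Q` is finite. The image `ψ(Q)` is torsion-free,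
abelian and virtually cyclic, hence cyclic, and it is infinite because `Q` is; so `Q / ker ψ ≅ ℤ`.
Every commutator of `Q` lies in the finite kernel and so has finite order, whereas the commutator
of the two reflections generating `D_∞` does not: `Q` has no quotient `D_∞` at all.
-/

/-- `f : ℕ × Fin n → ℕ × Fin n` is eventually a translation with translation
vector `m : Fin n → ℤ`: on each ray `ℕ × {x}`, for all sufficiently large `i`,
`f` sends `(i, x)` to `(i + m x, x)`. -/
def EvTrans (n : ℕ) (f : ℕ × Fin n → ℕ × Fin n) (m : Fin n → ℤ) : Prop :=
  ∀ x : Fin n, ∃ z : ℕ, ∀ i : ℕ, z ≤ i →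
    (f (i, x)).2 = x ∧ ((f (i, x)).1 : ℤ) = (i : ℤ) + m x

/-- Houghton's group `H_n`: the subgroup of the symmetric group on
`S = ℕ × Fin n` consisting of the permutations that are eventually
translations on each ray. -/
def Houghton (n : ℕ) : Subgroup (Equiv.Perm (ℕ × Fin n)) where
  carrier := {f : Equiv.Perm (ℕ × Fin n) | ∃ m : Fin n → ℤ, EvTrans n (⇑f) m}
  one_mem' := ⟨0, fun x => ⟨0, fun i _ => by simp⟩⟩
  mul_mem' := by
    rintro a b ⟨ma, hA⟩ ⟨mb, hB⟩
    refine ⟨ma + mb, fun x => ?_⟩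
    obtain ⟨za, hza⟩ := hA x
    obtain ⟨zb, hzb⟩ := hB x
    refine ⟨max zb ((za : ℤ) - mb x).toNat, fun i hi => ?_⟩
    have hib : zb ≤ i := le_trans (le_max_left _ _) hi
    obtain ⟨h2, h1⟩ := hzb i hib
    have hbx : (⇑b) (i, x) = ((b (i, x)).1, x) := Prod.ext_iff.mpr ⟨rfl, h2⟩
    have hk : za ≤ (b (i, x)).1 := by
      have h3 : ((za : ℤ) - mb x) ≤ (i : ℤ) := by
        calc ((za : ℤ) - mb x) ≤ (((za : ℤ) - mb x).toNat : ℤ) := Int.self_le_toNat _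
          _ ≤ (i : ℤ) := by exact_mod_cast le_trans (le_max_right _ _) hi
      have h4 : (za : ℤ) ≤ ((b (i, x)).1 : ℤ) := by rw [h1]; linarith
      exact_mod_cast h4
    obtain ⟨h4, h5⟩ := hza (b (i, x)).1 hk
    constructor
    · show ((a * b) (i, x)).2 = x
      rw [Equiv.Perm.mul_apply, hbx]
      exact h4
    · show (((a * b) (i, x)).1 : ℤ) = (i : ℤ) + (ma + mb) x
      rw [Equiv.Perm.mul_apply, hbx, h5, h1, Pi.add_apply]
      ring
  inv_mem' := by
    rintro a ⟨m, hm⟩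
    refine ⟨-m, fun x => ?_⟩
    obtain ⟨z, hz⟩ := hm x
    refine ⟨((z : ℤ) + m x).toNat, fun i hi => ?_⟩
    have h1 : (z : ℤ) + m x ≤ (i : ℤ) :=
      le_trans (Int.self_le_toNat _) (by exact_mod_cast hi)
    have h0 : (0 : ℤ) ≤ (i : ℤ) - m x := by
      have hz0 : (0 : ℤ) ≤ (z : ℤ) := Int.natCast_nonneg z
      linarith
    set j := ((i : ℤ) - m x).toNat with hjdef
    have hj' : (j : ℤ) = (i : ℤ) - m x := Int.toNat_of_nonneg h0
    have hjz : z ≤ j := by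
      have : (z : ℤ) ≤ (j : ℤ) := by rw [hj']; linarith
      exact_mod_cast this
    obtain ⟨h2, h3⟩ := hz j hjz
    have hfst : (a (j, x)).1 = i := by
      have : ((a (j, x)).1 : ℤ) = (i : ℤ) := by rw [h3, hj']; ring
      exact_mod_cast this
    have hfix : (⇑a) (j, x) = (i, x) := Prod.ext_iff.mpr ⟨hfst, h2⟩
    have hinv : (⇑a⁻¹) (i, x) = (j, x) := by
      rw [← hfix]
      exact Equiv.symm_apply_apply a (j, x)
    constructor
    · rw [hinv]
    · rw [hinv]
      show (j : ℤ) = (i : ℤ) + (-m) x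
      rw [hj', Pi.neg_apply]
      ring

open Function
open scoped commutatorElement

section Groups

variable {G H : Type*} [Group G] [Group H]

def IsVirtuallyCyclic (G : Type*) [Group G] : Prop :=
  ∃ C : Subgroup G, C.FiniteIndex ∧ IsCyclic C

theorem IsVirtuallyCyclic.of_surjective {f : G →* H} (hf : Surjective f)
    (hG : IsVirtuallyCyclic G) : IsVirtuallyCyclic H := by
  obtain ⟨C, hC, hCcyc⟩ := hG
  refine ⟨C.map f, ⟨fun h => hC.index_ne_zero ?_⟩,
    isCyclic_of_surjective (f.subgroupMap C) (f.subgroupMap_surjective C)⟩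
  exact zero_dvd_iff.mp (h ▸ C.index_map_dvd hf)

/-- The `k`-th power map, `k` the index of a cyclic subgroup, embeds a torsion-free abelian
group into that subgroup. -/
theorem IsVirtuallyCyclic.isCyclic {A : Type*} [CommGroup A] [IsMulTorsionFree A]
    (hA : IsVirtuallyCyclic A) : IsCyclic A := by
  obtain ⟨D, hD, hDcyc⟩ := hA
  let f : A →* D := (powMonoidHom D.index).codRestrict D D.pow_index_mem
  exact isCyclic_of_injective f fun a b hab =>
    pow_left_injective hD.index_ne_zero (congrArg Subtype.val hab)

theorem finite_of_isCyclic_of_isOfFinOrder [IsCyclic G] (hG : ∀ g : G, IsOfFinOrder g) :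
    Finite G := by
  obtain ⟨g, hg⟩ := IsCyclic.exists_ofOrder_eq_natCard (α := G)
  exact Nat.finite_of_card_ne_zero (hg ▸ (hG g).orderOf_pos.ne')

theorem IsVirtuallyCyclic.finite_of_forall_isOfFinOrder (hG : IsVirtuallyCyclic G)
    {K : Subgroup G} (hK : ∀ g ∈ K, IsOfFinOrder g) : Finite K := by
  obtain ⟨C, hC, hCcyc⟩ := hG
  have : Finite (K.subgroupOf C) := finite_of_isCyclic_of_isOfFinOrder fun g =>
    (Subtype.val_injective.comp Subtype.val_injective).isOfFinOrder_iff
      (f := C.subtype.comp (K.subgroupOf C).subtype) |>.mp (hK _ g.2)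
  have : Finite (C.subgroupOf K) :=
    Finite.of_injective (fun g : C.subgroupOf K => (⟨⟨g.1.1, g.2⟩, g.1.2⟩ : K.subgroupOf C))
      fun g g' h => Subtype.ext (Subtype.ext (congrArg (fun x : K.subgroupOf C => x.1.1) h))
  exact (C.subgroupOf K).finite_iff_finite_and_finiteIndex.mpr ⟨this, inferInstance⟩

/-- In `D_∞` the commutator of the reflections `sr 0` and `sr 1` is the rotation `r 2`, of
infinite order. -/
theorem DihedralGroup.not_surjective_of_forall_isOfFinOrder_commutator
    (hG : ∀ a b : G, IsOfFinOrder ⁅a, b⁆) (π : G →* DihedralGroup 0) : ¬ Surjective π := by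
  intro hπ
  obtain ⟨a, ha⟩ := hπ (sr 0)
  obtain ⟨b, hb⟩ := hπ (sr 1)
  have hcomm : π ⁅a, b⁆ = r 1 ^ 2 := by
    rw [map_commutatorElement, ha, hb]
    decide
  have := π.isOfFinOrder (hG a b)
  rw [hcomm, isOfFinOrder_pow, ← orderOf_pos_iff, orderOf_r_one] at this
  omega

end Groups

theorem Equiv.Perm.isOfFinOrder_of_finite_support {α : Type*} {f : Equiv.Perm α}
    (hf : {x | f x ≠ x}.Finite) : IsOfFinOrder f := by
  classical
  have : Finite {x // f x ≠ x} := hf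
  have := Fintype.ofFinite {x // f x ≠ x}
  rw [← ofSubtype_subtypePerm (p := fun x => f x ≠ x) (fun _ => f.injective.ne_iff)
    (fun _ h => h)]
  exact ofSubtype.isOfFinOrder (isOfFinOrder_of_finite _)

namespace EvTrans

variable {n : ℕ} {f g : ℕ × Fin n → ℕ × Fin n} {m m' : Fin n → ℤ}

theorem unique (hm : EvTrans n f m) (hm' : EvTrans n f m') : m = m' := by
  funext x
  obtain ⟨z, hz⟩ := hm x
  obtain ⟨z', hz'⟩ := hm' x
  have := (hz (max z z') (le_max_left _ _)).2.symm.trans (hz' _ (le_max_right _ _)).2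
  omega

theorem comp (hf : EvTrans n f m) (hg : EvTrans n g m') : EvTrans n (f ∘ g) (m + m') := by
  intro x
  obtain ⟨zf, hzf⟩ := hf x
  obtain ⟨zg, hzg⟩ := hg x
  refine ⟨zg + zf + (m' x).natAbs, fun i hi => ?_⟩
  obtain ⟨hgx, hgi⟩ := hzg i (by omega)
  obtain ⟨hfx, hfi⟩ := hzf (g (i, x)).1 (by omega)
  rw [Function.comp_apply, show g (i, x) = ((g (i, x)).1, x) from Prod.ext rfl hgx]
  exact ⟨hfx, by rw [hfi, hgi, Pi.add_apply]; ring⟩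

theorem finite_of_zero (hf : EvTrans n f 0) : {p | f p ≠ p}.Finite := by
  choose z hz using hf
  refine ((Set.finite_Iio (Finset.univ.sup z)).prod Set.finite_univ).subset ?_
  rintro ⟨i, x⟩ hp
  by_contra hi
  simp only [Set.mem_prod, Set.mem_Iio, Set.mem_univ, and_true, not_lt] at hi
  obtain ⟨hx, hi⟩ := hz x i ((Finset.le_sup (Finset.mem_univ x)).trans hi)
  exact hp (Prod.ext (by simpa using hi) hx)

end EvTrans

namespace Houghton

variable {n : ℕ}

noncomputable def translation (f : Houghton n) : Fin n → ℤ :=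
  Classical.choose f.2

theorem evTrans_translation (f : Houghton n) : EvTrans n f (translation f) :=
  Classical.choose_spec f.2

noncomputable def translationHom (n : ℕ) : Houghton n →* Multiplicative (Fin n → ℤ) :=
  MonoidHom.mk' (fun f => .ofAdd (translation f)) fun f g => congrArg _ <|
    (evTrans_translation (f * g)).unique ((evTrans_translation f).comp (evTrans_translation g))

theorem isOfFinOrder_of_mem_ker_translationHom {f : Houghton n}
    (hf : f ∈ (translationHom n).ker) : IsOfFinOrder (f : Equiv.Perm (ℕ × Fin n)) := by
  have hf : translation f = 0 := hf
  exact Equiv.Perm.isOfFinOrder_of_finite_support <| EvTrans.finite_of_zero <|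
    hf ▸ evTrans_translation f

end Houghton

theorem houghton_infinite_virtually_cyclic_is_finite_by_Z_general (n : ℕ)
    (Q : Subgroup (Equiv.Perm (ℕ × Fin n))) (hQ : Q ≤ Houghton n)
    (hinf : Infinite Q)
    (hvc : ∃ C : Subgroup ↥Q, C.FiniteIndex ∧ IsCyclic ↥C) :
    (∃ (F : Subgroup ↥Q) (_ : F.Normal), Finite F ∧
      Nonempty ((↥Q ⧸ F) ≃* Multiplicative ℤ)) ∧
    ¬ ∃ (F : Subgroup ↥Q) (_ : F.Normal), Finite F ∧
      Nonempty ((↥Q ⧸ F) ≃* DihedralGroup 0) := by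
  have hvc : IsVirtuallyCyclic Q := hvc
  let ψ : Q →* Multiplicative (Fin n → ℤ) :=
    (Houghton.translationHom n).comp (Subgroup.inclusion hQ)
  have hker : Finite ψ.ker := hvc.finite_of_forall_isOfFinOrder fun q hq =>
    Q.subtype_injective.isOfFinOrder_iff.mp (Houghton.isOfFinOrder_of_mem_ker_translationHom hq)
  have : Infinite ψ.range := by
    rw [← not_finite_iff_infinite]
    intro hrange
    have := ψ.finite_iff_finite_ker_range.mpr ⟨hker, hrange⟩
    exact not_finite Q
  have : IsCyclic ψ.range := (hvc.of_surjective ψ.rangeRestrict_surjective).isCyclic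
  refine ⟨⟨ψ.ker, inferInstance, hker,
    ⟨(QuotientGroup.quotientKerEquivRange ψ).trans intCyclicMulEquiv.symm⟩⟩, ?_⟩
  rintro ⟨F, _, -, ⟨e⟩⟩
  refine DihedralGroup.not_surjective_of_forall_isOfFinOrder_commutator (fun a b => ?_)
    (e.toMonoidHom.comp (QuotientGroup.mk' F)) (e.surjective.comp (QuotientGroup.mk'_surjective F))
  have hab : ⁅a, b⁆ ∈ ψ.ker := by
    rw [MonoidHom.mem_ker, map_commutatorElement, commutatorElement_eq_one_iff_mul_comm]
    exact mul_comm _ _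
  exact ψ.ker.subtype.isOfFinOrder (isOfFinOrder_of_finite (⟨_, hab⟩ : ψ.ker))

/-- Every infinite virtually cyclic subgroup `Q` of
Houghton's group `H_n` is finite-by-`ℤ`: there is a finite normal subgroup
`F ⊴ Q` with `Q/F` infinite cyclic.  In particular, no infinite virtually
cyclic subgroup of `H_n` is finite-by-(infinite dihedral). -/
theorem houghton_infinite_virtually_cyclic_is_finite_by_Z (n : ℕ) (hn : 1 ≤ n)
    (Q : Subgroup (Equiv.Perm (ℕ × Fin n))) (hQ : Q ≤ Houghton n)
    (hinf : Infinite Q)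
    (hvc : ∃ C : Subgroup ↥Q, C.FiniteIndex ∧ IsCyclic ↥C) :
    (∃ (F : Subgroup ↥Q) (_ : F.Normal), Finite F ∧
      Nonempty ((↥Q ⧸ F) ≃* Multiplicative ℤ)) ∧
    ¬ ∃ (F : Subgroup ↥Q) (_ : F.Normal), Finite F ∧
      Nonempty ((↥Q ⧸ F) ≃* DihedralGroup 0) :=
  houghton_infinite_virtually_cyclic_is_finite_by_Z_general n Q hQ hinf hvc
end

section
/- Let G be a group, F a finite normal subgroup of G, and K a finite subgroup of G. Then KF is a subgroup of G, the normalizer N_G(K) is contained in N_G(KF), and N_G(K) has finite index in N_G(KF). -/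
open scoped Pointwise

/-!
`N_G(KF)` acts by conjugation on the subgroups of the finite group `KF`, and the stabilizer of `K`
is `N_G(K) ∩ N_G(KF)`; by orbit–stabilizer the index is the size of the orbit of `K`, hence finite.
-/

namespace Subgroup

variable {G : Type*} [Group G]

lemma finite_setOf_le (L : Subgroup G) [Finite L] : {S : Subgroup G | S ≤ L}.Finite :=
  ((Set.toFinite (L : Set G)).finite_subsets).preimage SetLike.coe_injective.injOn

instance finite_sup_of_normal (K F : Subgroup G) [F.Normal] [Finite K] [Finite F] :
    Finite (K ⊔ F : Subgroup G) := by
  have : ((K ⊔ F : Subgroup G) : Set G).Finite := by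
    rw [mul_normal]; exact (Set.toFinite _).mul (Set.toFinite _)
  exact this.to_subtype

lemma relIndex_normalizer_ne_zero_of_le {H L : Subgroup G} (hHL : H ≤ L) [Finite L] :
    (normalizer (H : Set G)).relIndex (normalizer (L : Set G)) ≠ 0 := by
  let N := normalizer (L : Set G)
  let _ : MulAction N (Subgroup G) :=
    MulAction.compHom _ ((ConjAct.toConjAct : G ≃* ConjAct G).toMonoidHom.comp N.subtype)
  have hstab : MulAction.stabilizer N H = (normalizer (H : Set G)).subgroupOf N := by
    ext g
    exact conjAct_pointwise_smul_iff
  have horbit : MulAction.orbit N H ⊆ {S : Subgroup G | S ≤ L} := by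
    rintro _ ⟨g, rfl⟩
    show ConjAct.toConjAct (g : G) • H ≤ L
    rw [← conjAct_pointwise_smul_eq_self g.2]
    exact pointwise_smul_le_pointwise_smul_iff.mpr hHL
  have : Finite (MulAction.orbit N H) := ((finite_setOf_le L).subset horbit).to_subtype
  have : Finite (N ⧸ MulAction.stabilizer N H) :=
    .of_equiv _ (MulAction.orbitEquivQuotientStabilizer N H)
  rw [hstab] at this
  exact index_ne_zero_of_finite

end Subgroup

/-- Let `G` be a group, `F` a finite normal subgroup and
`K` a finite subgroup.  Then the set `KF = {k * f : k ∈ K, f ∈ F}` is a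
subgroup of `G` (namely `K ⊔ F`), the normalizer `N_G(K)` is contained in
`N_G(KF)`, and `N_G(K)` has finite index in `N_G(KF)`. -/
theorem normalizer_finite_index_in_normalizer_of_mul_normal
    {G : Type*} [Group G] (F K : Subgroup G) [F.Normal]
    (hF : Finite F) (hK : Finite K) :
    ((K : Set G) * (F : Set G) = ((K ⊔ F : Subgroup G) : Set G)) ∧
    Subgroup.normalizer (K : Set G) ≤ Subgroup.normalizer ((K ⊔ F : Subgroup G) : Set G) ∧
    (Subgroup.normalizer (K : Set G)).relIndex
      (Subgroup.normalizer ((K ⊔ F : Subgroup G) : Set G)) ≠ 0 :=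
  ⟨(Subgroup.mul_normal K F).symm,
    Subgroup.normalizer_le_normalizer_sup_of_normalizer_le_left
      (by rw [Subgroup.normalizer_eq_top (H := F)]; exact le_top),
    Subgroup.relIndex_normalizer_ne_zero_of_le le_sup_left⟩
end
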